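/- Let t₀ ∈ ℝ, let z : [t₀,∞) → ℝ^q, x : [t₀,∞) → ℝⁿ and ξ : [t₀,∞) → ℝᵐ be continuous signals, let {t_k}_{k≥0} be a strictly increasing sequence with first element t₀ generated by the triggering law with a class K∞ function γ̄, and define r(t) = ∫_{t_k}^{t} ξ(s) ds for t ∈ [t_k, t_{k+1}). Assume there exist class KL functions β_z, β_x and class K∞ functions γ_z^x, γ_z^r, γ_x^z, γ_x^r, γ_ξ^z, γ_ξ^x, γ_ξ^r such that for all t₀ ≤ t₀′ ≤ t: ‖z(t)‖ ≤ max{β_z(‖z(t₀′)‖, t−t₀′), γ_z^x(‖x_[t₀′,t]‖), γ_z^r(‖r_[t₀′,t]‖)}, ‖x(t)‖ ≤ max{β_x(‖x(t₀′)‖, t−t₀′), γ_x^z(‖z_[t₀′,t]‖), γ_x^r(‖r_[t₀′,t]‖)}, and ‖ξ(t)‖ ≤ max{γ_ξ^z(‖z_[t₀′,t]‖), γ_ξ^x(‖x_[t₀′,t]‖), γ_ξ^r(‖r_[t₀′,t]‖)}. Assume the small-gain condition γ_z^x(γ_x^z(s)) < s for all s > 0; set γ̄_z^r := max{γ_z^r,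 γ_z^x ∘ γ_x^r}, γ̄_x^r := max{γ_x^r, γ_x^z ∘ γ_z^r} and γ := max{γ_ξ^z ∘ γ̄_z^r, γ_ξ^x ∘ γ̄_x^r, γ_ξ^r}, and assume limsup_{s→0⁺} γ(s)/s < ∞. Finally assume there is ε > 1 with γ̄(s) ≥ ε·γ(s) for all s > 0 and that lim_{s→0⁺} γ̄(s)/s exists and is positive and finite. Then inf_{k≥0} (t_{k+1} − t_k) > 0 (no Zeno behavior), and z(t) → 0 and x(t) → 0 as t → ∞. -/

import Mathlib

/-!
Between two events the trigger keeps `γ̄(‖r‖) ≤ sup ‖ξ‖`: `r` grows at rate at most `‖ξ‖`, and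
the event fires as soon as `‖r_[t_k,t]‖ = (t - t_k) γ̄(‖r_[t_k,t]‖)`. So `r` is a feedback of `ξ`
with gain `γ̄⁻¹`. Through the ISS and BSIBO estimates and the small-gain condition, `sup ‖ξ‖` is
bounded by the contribution of the initial state and by
`γ(sup ‖r‖) ≤ γ̄(sup ‖r‖) / ε ≤ sup ‖ξ‖ / ε`; as `ε > 1` the loop closes and all signals are
bounded. The same inequalities between the limit superiors, where the initial-state terms vanish,
force `limsup ‖z‖ = limsup ‖x‖ = 0`. Finally, `γ̄` is at most linear near `0`, so with `‖ξ‖ ≤ M`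
the error `r` needs a time `1 / K` to reach the trigger level; applied to a local bound on `ξ`
this first shows `t_k → ∞`, and with the global bound it gives the uniform dwell time.
-/

open Filter Set

/-- A function is of class K∞. -/
def IsClassKInf (γ : ℝ → ℝ) : Prop :=
  ContinuousOn γ (Set.Ici 0) ∧ StrictMonoOn γ (Set.Ici 0) ∧ γ 0 = 0 ∧
    Filter.Tendsto γ Filter.atTop Filter.atTop

/-- A function is of class KL. -/
def IsClassKL (β : ℝ → ℝ → ℝ) : Prop :=
  (∀ t, 0 ≤ t → ContinuousOn (fun s => β s t) (Set.Ici 0) ∧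
      StrictMonoOn (fun s => β s t) (Set.Ici 0) ∧ β 0 t = 0) ∧
  (∀ s, 0 ≤ s → AntitoneOn (fun t => β s t) (Set.Ici 0) ∧
      Filter.Tendsto (fun t => β s t) Filter.atTop (nhds 0))

/-- `‖v_[a,b]‖ = sup_{a ≤ τ ≤ b} ‖v τ‖`. -/
noncomputable def supNorm {E : Type*} [NormedAddCommGroup E] (v : ℝ → E) (a b : ℝ) : ℝ :=
  sSup ((fun τ => ‖v τ‖) '' Set.Icc a b)

/-- The next triggering time (in `EReal`, so that `sInf ∅ = ⊤`). -/
noncomputable def triggerTime {E : Type*} [NormedAddCommGroup E]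
    (γb : ℝ → ℝ) (r : ℝ → E) (tk : ℝ) : EReal :=
  sInf (((↑) : ℝ → EReal) ''
    {t : ℝ | tk < t ∧ (t - tk) * γb (supNorm r tk t) = supNorm r tk t ∧ supNorm r tk t ≠ 0})

open Topology

namespace IsClassKInf

variable {γ : ℝ → ℝ} (hγ : IsClassKInf γ)
include hγ

lemma map_zero : γ 0 = 0 := hγ.2.2.1

lemma mono {a b : ℝ} (ha : 0 ≤ a) (hab : a ≤ b) : γ a ≤ γ b :=
  hγ.2.1.monotoneOn ha (ha.trans hab) hab

lemma nonneg {a : ℝ} (ha : 0 ≤ a) : 0 ≤ γ a := hγ.map_zero ▸ hγ.mono le_rfl ha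

lemma pos {a : ℝ} (ha : 0 < a) : 0 < γ a := hγ.map_zero ▸ hγ.2.1 self_mem_Ici ha.le ha

lemma map_max {a b : ℝ} (ha : 0 ≤ a) (hb : 0 ≤ b) : γ (max a b) = max (γ a) (γ b) :=
  hγ.2.1.monotoneOn.map_max ha hb

lemma exists_forall_le_iff {y : ℝ} (hy : 0 ≤ y) :
    ∃ b, 0 ≤ b ∧ ∀ a, 0 ≤ a → (γ a ≤ y ↔ a ≤ b) := by
  obtain ⟨c, hyc, hc⟩ :=
    ((hγ.2.2.2.eventually_ge_atTop y).and (eventually_ge_atTop (0 : ℝ))).exists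
  obtain ⟨b, hb, rfl⟩ : ∃ b ∈ Icc 0 c, γ b = y :=
    intermediate_value_Icc hc (hγ.1.mono Icc_subset_Ici_self) ⟨by rwa [hγ.map_zero], hyc⟩
  exact ⟨b, hb.1, fun a ha => hγ.2.1.le_iff_le ha hb.1⟩

lemma tendsto_comp {ι : Type*} {l : Filter ι} {f : ι → ℝ} {a : ℝ} (ha : 0 ≤ a)
    (hf : Tendsto f l (𝓝 a)) (hf0 : ∀ i, 0 ≤ f i) : Tendsto (fun i => γ (f i)) l (𝓝 (γ a)) :=
  (hγ.1 a ha).tendsto.comp (tendsto_nhdsWithin_iff.2 ⟨hf, Eventually.of_forall hf0⟩)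

lemma exists_le_mul_of_le {C : ℝ} (h0 : ∀ᶠ y in 𝓝[>] 0, γ y ≤ C * y) (M : ℝ) :
    ∃ K, 0 < K ∧ ∀ y, 0 < y → γ y ≤ M → γ y ≤ K * y := by
  obtain ⟨δ, hδ, hδC⟩ := mem_nhdsGT_iff_exists_Ioo_subset.1 h0
  refine ⟨max (max C (M / δ)) 1, lt_max_of_lt_right one_pos, fun y hy hyM => ?_⟩
  rcases lt_or_ge y δ with hyδ | hyδ
  · calc γ y ≤ C * y := hδC ⟨hy, hyδ⟩
      _ ≤ _ := by gcongr; exact (le_max_left _ _).trans (le_max_left _ _)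
  · have hM : 0 ≤ M := (hγ.nonneg hy.le).trans hyM
    calc γ y ≤ M := hyM
      _ ≤ M / δ * y := by rw [div_mul_eq_mul_div, le_div_iff₀ hδ]; gcongr
      _ ≤ _ := by gcongr; exact (le_max_right _ _).trans (le_max_left _ _)

end IsClassKInf

lemma eventually_le_mul_of_tendsto_div {f : ℝ → ℝ} {C : ℝ}
    (h : Tendsto (fun s => f s / s) (𝓝[>] 0) (𝓝 C)) : ∀ᶠ s in 𝓝[>] 0, f s ≤ (C + 1) * s :=
  (h.eventually (gt_mem_nhds (lt_add_one C))).mp <|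
    eventually_mem_nhdsWithin.mono fun _ hs hlt => ((div_lt_iff₀ hs).1 hlt).le

namespace IsClassKL

variable {β : ℝ → ℝ → ℝ} (hβ : IsClassKL β)
include hβ

lemma nonneg {s u : ℝ} (hs : 0 ≤ s) (hu : 0 ≤ u) : 0 ≤ β s u :=
  (hβ.1 u hu).2.2 ▸ (hβ.1 u hu).2.1.monotoneOn self_mem_Ici hs hs

lemma antitone {s u u' : ℝ} (hs : 0 ≤ s) (hu : 0 ≤ u) (huu' : u ≤ u') : β s u' ≤ β s u :=
  (hβ.2 s hs).1 hu (hu.trans huu') huu'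

lemma tendsto_zero {s : ℝ} (hs : 0 ≤ s) : Tendsto (β s) atTop (𝓝 0) := (hβ.2 s hs).2

end IsClassKL

section Sup

variable {E : Type*} [NormedAddCommGroup E] {v : ℝ → E} {a b M : ℝ}

lemma supNorm_nonneg (v : ℝ → E) (a b : ℝ) : 0 ≤ supNorm v a b :=
  Real.sSup_nonneg (by rintro _ ⟨τ, -, rfl⟩; exact norm_nonneg _)

lemma supNorm_le (hM : 0 ≤ M) (h : ∀ τ ∈ Icc a b, ‖v τ‖ ≤ M) : supNorm v a b ≤ M :=
  Real.sSup_le (by rintro _ ⟨τ, hτ, rfl⟩; exact h τ hτ) hM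

lemma norm_le_supNorm (hv : BddAbove ((fun τ => ‖v τ‖) '' Icc a b)) {τ : ℝ}
    (hτ : τ ∈ Icc a b) : ‖v τ‖ ≤ supNorm v a b :=
  le_csSup hv ⟨τ, hτ, rfl⟩

lemma IsClassKInf.map_supNorm_le {γ : ℝ → ℝ} (hγ : IsClassKInf γ) (hM : 0 ≤ M)
    (h : ∀ τ ∈ Icc a b, ‖v τ‖ ≤ M) : γ (supNorm v a b) ≤ γ M :=
  hγ.mono (supNorm_nonneg v a b) (supNorm_le hM h)

/-- `‖v_[a,∞)‖`. -/
noncomputable def tailSup (v : ℝ → E) (a : ℝ) : ℝ := sSup ((fun τ => ‖v τ‖) '' Ici a)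

lemma tailSup_nonneg (v : ℝ → E) (a : ℝ) : 0 ≤ tailSup v a :=
  Real.sSup_nonneg (by rintro _ ⟨τ, -, rfl⟩; exact norm_nonneg _)

lemma tailSup_le (hM : 0 ≤ M) (h : ∀ τ, a ≤ τ → ‖v τ‖ ≤ M) : tailSup v a ≤ M :=
  Real.sSup_le (by rintro _ ⟨τ, hτ, rfl⟩; exact h τ hτ) hM

lemma bddAbove_norm_image_Ici (h : ∀ τ, a ≤ τ → ‖v τ‖ ≤ M) :
    BddAbove ((fun τ => ‖v τ‖) '' Ici a) :=
  ⟨M, by rintro _ ⟨τ, hτ, rfl⟩; exact h τ hτ⟩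

lemma norm_le_tailSup {a₀ : ℝ} (hv : BddAbove ((fun τ => ‖v τ‖) '' Ici a₀)) (ha : a₀ ≤ a)
    {τ : ℝ} (hτ : a ≤ τ) : ‖v τ‖ ≤ tailSup v a :=
  le_csSup (hv.mono (image_mono (Ici_subset_Ici.2 ha))) ⟨τ, hτ, rfl⟩

lemma tendsto_tailSup {t : ℕ → ℝ} (ht : Monotone t)
    (hv : BddAbove ((fun τ => ‖v τ‖) '' Ici (t 0))) :
    Tendsto (fun k => tailSup v (t k)) atTop (𝓝 (⨅ k, tailSup v (t k))) :=
  tendsto_atTop_ciInf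
    (fun _ _ hkl => tailSup_le (tailSup_nonneg _ _) fun _ hτ =>
      norm_le_tailSup hv (ht (Nat.zero_le _)) ((ht hkl).trans hτ))
    ⟨0, by rintro _ ⟨k, rfl⟩; exact tailSup_nonneg _ _⟩

lemma iInf_tailSup_nonneg (v : ℝ → E) (t : ℕ → ℝ) : 0 ≤ ⨅ k, tailSup v (t k) :=
  le_ciInf fun _ => tailSup_nonneg _ _

lemma iInf_tailSup_le_tailSup (v : ℝ → E) (t : ℕ → ℝ) (m : ℕ) :
    ⨅ k, tailSup v (t k) ≤ tailSup v (t m) :=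
  ciInf_le ⟨0, by rintro _ ⟨k, rfl⟩; exact tailSup_nonneg _ _⟩ m

lemma IsClassKInf.tendsto_map_tailSup {γ : ℝ → ℝ} (hγ : IsClassKInf γ) {t : ℕ → ℝ}
    (ht : Monotone t) (hv : BddAbove ((fun τ => ‖v τ‖) '' Ici (t 0))) :
    Tendsto (fun k => γ (tailSup v (t k))) atTop (𝓝 (γ (⨅ k, tailSup v (t k)))) :=
  hγ.tendsto_comp (iInf_tailSup_nonneg v t) (tendsto_tailSup ht hv) fun _ => tailSup_nonneg _ _

lemma IsClassKInf.map_tailSup_le {γ : ℝ → ℝ} (hγ : IsClassKInf γ) {y : ℝ} (hy : 0 ≤ y)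
    (h : ∀ τ, a ≤ τ → γ ‖v τ‖ ≤ y) : γ (tailSup v a) ≤ y := by
  obtain ⟨c, hc, hcy⟩ := hγ.exists_forall_le_iff hy
  exact (hcy _ (tailSup_nonneg _ _)).2
    (tailSup_le hc fun τ hτ => (hcy _ (norm_nonneg _)).1 (h τ hτ))

lemma tendsto_zero_of_iInf_tailSup_le_zero {t : ℕ → ℝ} (ht : Monotone t)
    (hv : BddAbove ((fun τ => ‖v τ‖) '' Ici (t 0))) (h : ⨅ k, tailSup v (t k) ≤ 0) :
    Tendsto v atTop (𝓝 0) := by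
  refine Metric.tendsto_atTop.2 fun η hη => ?_
  obtain ⟨k, hk⟩ := exists_lt_of_ciInf_lt (h.trans_lt hη)
  refine ⟨t k, fun τ hτ => ?_⟩
  rw [dist_zero_right]
  exact (norm_le_tailSup hv (ht (Nat.zero_le k)) hτ).trans_lt hk

lemma ContinuousOn.norm_le_supNorm {a₀ : ℝ} (hv : ContinuousOn v (Ici a₀)) (ha : a₀ ≤ a) {τ : ℝ}
    (hτ : τ ∈ Icc a b) : ‖v τ‖ ≤ supNorm v a b :=
  le_csSup (isCompact_Icc.bddAbove_image
    (hv.norm.mono (Icc_subset_Ici_self.trans (Ici_subset_Ici.2 ha)))) ⟨τ, hτ, rfl⟩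

end Sup

lemma isGLB_of_coe_eq_sInf {S : Set ℝ} {b : ℝ} (h : (b : EReal) = sInf ((↑) '' S)) :
    IsGLB S b := by
  refine ⟨fun s hs => ?_, fun c hc => ?_⟩
  · exact EReal.coe_le_coe_iff.1 (h ▸ sInf_le ⟨s, hs, rfl⟩)
  · refine EReal.coe_le_coe_iff.1 (h ▸ le_sInf ?_)
    rintro _ ⟨s, hs, rfl⟩
    exact EReal.coe_le_coe_iff.2 (hc hs)

section Trigger

variable {E : Type*} [NormedAddCommGroup E]

def triggerSet (γb : ℝ → ℝ) (r : ℝ → E) (tk : ℝ) : Set ℝ :=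
  {t : ℝ | tk < t ∧ (t - tk) * γb (supNorm r tk t) = supNorm r tk t ∧ supNorm r tk t ≠ 0}

variable {γb : ℝ → ℝ} {r : ℝ → E} {a s M K : ℝ}

lemma gain_supNorm_le_of_mem_triggerSet (hs : s ∈ triggerSet γb r a)
    (hr : ∀ u ∈ Icc a s, ‖r u‖ ≤ M * (s - a)) :
    0 < supNorm r a s ∧ γb (supNorm r a s) ≤ M := by
  obtain ⟨has, heq, hne⟩ := hs
  have hS : supNorm r a s ≤ M * (s - a) :=
    supNorm_le ((norm_nonneg _).trans (hr a ⟨le_rfl, has.le⟩)) hr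
  refine ⟨(supNorm_nonneg r a s).lt_of_ne' hne, ?_⟩
  exact le_of_mul_le_mul_left (by linarith) (sub_pos.2 has)

lemma one_div_le_sub_of_mem_triggerSet (hs : s ∈ triggerSet γb r a)
    (hr : ∀ u ∈ Icc a s, ‖r u‖ ≤ M * (s - a)) (hK : 0 < K)
    (hlin : ∀ y, 0 < y → γb y ≤ M → γb y ≤ K * y) : 1 / K ≤ s - a := by
  obtain ⟨hS, hγS⟩ := gain_supNorm_le_of_mem_triggerSet hs hr
  have hKS := hlin _ hS hγS
  have heq := hs.2.1
  rw [div_le_iff₀ hK]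
  nlinarith [mul_le_mul_of_nonneg_left hKS (sub_pos.2 hs.1).le]

end Trigger

lemma StrictMono.exists_le_mem_Ico {t : ℕ → ℝ} (ht : StrictMono t) {k N : ℕ} {u : ℝ}
    (hk : t k ≤ u) (hN : u < t N) : ∃ j, k ≤ j ∧ u ∈ Ico (t j) (t (j + 1)) := by
  classical
  have hex : ∃ i, u < t i := ⟨N, hN⟩
  have hkj : k < Nat.find hex := by
    by_contra! h
    exact (Nat.find_spec hex).not_ge (hk.trans' (ht.monotone h))
  obtain ⟨j, hj⟩ := Nat.exists_eq_add_one_of_ne_zero (Nat.ne_zero_of_lt hkj)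
  refine ⟨j, by omega, not_lt.1 (Nat.find_min hex (by omega)), hj ▸ Nat.find_spec hex⟩

section Sampled

variable {E : Type*} [NormedAddCommGroup E] [NormedSpace ℝ E] {t : ℕ → ℝ} {ξ r : ℝ → E}
  {γb : ℝ → ℝ} {C M K : ℝ}
  (hmono : StrictMono t) (hr : ∀ k, ∀ s ∈ Ico (t k) (t (k + 1)), r s = ∫ τ in (t k)..s, ξ τ)
  (hglb : ∀ k, IsGLB (triggerSet γb r (t k)) (t (k + 1)))

include hmono hr

lemma norm_le_mul_of_mem_Ico {j k : ℕ} {u : ℝ} (hkj : k ≤ j) (hu : u ∈ Ico (t j) (t (j + 1)))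
    (hξ : ∀ v ∈ Icc (t k) u, ‖ξ v‖ ≤ M) : ‖r u‖ ≤ M * (u - t k) := by
  have htkj := hmono.monotone hkj
  have hM : 0 ≤ M := (norm_nonneg _).trans (hξ u ⟨htkj.trans hu.1, le_rfl⟩)
  rw [hr j u hu]
  refine (intervalIntegral.norm_integral_le_of_norm_le_const (C := M) fun v hv => ?_).trans ?_
  · rw [uIoc_of_le hu.1] at hv
    exact hξ v ⟨htkj.trans hv.1.le, hv.2⟩
  · rw [abs_of_nonneg (sub_nonneg.2 hu.1)]
    gcongr

lemma norm_le_mul_of_lt {k N : ℕ} {s : ℝ} (hs : s < t N) (hξ : ∀ v ∈ Icc (t k) s, ‖ξ v‖ ≤ M) :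
    ∀ u ∈ Icc (t k) s, ‖r u‖ ≤ M * (s - t k) := by
  intro u hu
  obtain ⟨j, hkj, hj⟩ := hmono.exists_le_mem_Ico hu.1 (hu.2.trans_lt hs)
  have hM : 0 ≤ M := (norm_nonneg _).trans (hξ u hu)
  calc ‖r u‖ ≤ M * (u - t k) :=
        norm_le_mul_of_mem_Ico hmono hr hkj hj fun v hv => hξ v ⟨hv.1, hv.2.trans hu.2⟩
    _ ≤ M * (s - t k) := by gcongr; exact hu.2

include hglb

/-- Absence of Zeno behaviour: if the `t k` accumulated at `T`, `ξ` would be bounded near `T`,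
hence `r` would grow at a bounded rate and inter-event times would stay above some `1 / K`. -/
lemma tendsto_atTop_of_isGLB_triggerSet (hξ : ContinuousOn ξ (Ici (t 0)))
    (hγb : IsClassKInf γb) (hlin : ∀ᶠ y in 𝓝[>] 0, γb y ≤ C * y) : Tendsto t atTop atTop := by
  rw [hmono.monotone.tendsto_atTop_atTop_iff]
  by_contra! hbdd
  obtain ⟨b, hb⟩ := hbdd
  obtain ⟨T, hT⟩ : ∃ T, IsLUB (range t) T :=
    ⟨_, isLUB_csSup (range_nonempty t) ⟨b, by rintro _ ⟨k, rfl⟩; exact (hb k).le⟩⟩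
  have htT : ∀ k, t k < T := fun k => (hmono k.lt_succ_self).trans_le (hT.1 ⟨k + 1, rfl⟩)
  obtain ⟨M, hM⟩ := isCompact_Icc.exists_bound_of_continuousOn
    (hξ.mono (Icc_subset_Ici_self : Icc (t 0) T ⊆ _))
  obtain ⟨K, hK, hKlin⟩ := hγb.exists_le_mul_of_le hlin M
  obtain ⟨_, ⟨k, rfl⟩, hk, -⟩ := hT.exists_between (sub_lt_self T (one_div_pos.2 hK))
  obtain ⟨s, hs, -, hs2⟩ := (hglb k).exists_between (hmono (k + 1).lt_succ_self)
  have hξs : ∀ v ∈ Icc (t k) s, ‖ξ v‖ ≤ M := fun v hv =>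
    hM v ⟨(hmono.monotone k.zero_le).trans hv.1, (hv.2.trans hs2.le).trans (htT _).le⟩
  have := one_div_le_sub_of_mem_triggerSet hs (norm_le_mul_of_lt hmono hr hs2 hξs) hK hKlin
  linarith [htT (k + 1 + 1)]

variable (htop : Tendsto t atTop atTop)
include htop

/-- The trigger condition holds at instants `s ∈ triggerSet` arbitrarily close to `t (k + 1)`;
continuity of `ξ` at `t (k + 1)` controls `ξ` on the overshoot `[t (k + 1), s]`. -/
lemma gain_norm_le_of_mem_Ico (hξ : ContinuousOn ξ (Ici (t 0))) (hγb : IsClassKInf γb) {k : ℕ}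
    (hM : ∀ v ∈ Icc (t k) (t (k + 1)), ‖ξ v‖ ≤ M) {u : ℝ} (hu : u ∈ Ico (t k) (t (k + 1))) :
    γb ‖r u‖ ≤ M := by
  refine le_of_forall_pos_le_add fun η hη => ?_
  have hb := hM _ ⟨(hmono k.lt_succ_self).le, le_rfl⟩
  have hcont : ContinuousWithinAt ξ (Ici (t (k + 1))) (t (k + 1)) :=
    (hξ _ (hmono.monotone (Nat.zero_le _))).mono (Ici_subset_Ici.2 (hmono.monotone (Nat.zero_le _)))
  obtain ⟨c, hc, hcξ⟩ := mem_nhdsGE_iff_exists_Ico_subset.1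
    (hcont.norm.eventually (gt_mem_nhds (show ‖ξ (t (k + 1))‖ < M + η by linarith)))
  obtain ⟨s, hs, hs1, hs2⟩ := (hglb k).exists_between hc
  have hξs : ∀ v ∈ Icc (t k) s, ‖ξ v‖ ≤ M + η := by
    intro v hv
    rcases le_or_gt v (t (k + 1)) with hvk | hvk
    · linarith [hM v ⟨hv.1, hvk⟩]
    · exact (hcξ ⟨hvk.le, hv.2.trans_lt hs2⟩).le
  obtain ⟨N, hN⟩ := (htop.eventually_gt_atTop s).exists
  have hrs := norm_le_mul_of_lt hmono hr hN hξs
  have hus : u ∈ Icc (t k) s := ⟨hu.1, hu.2.le.trans hs1⟩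
  calc γb ‖r u‖ ≤ γb (supNorm r (t k) s) :=
        hγb.mono (norm_nonneg _) (norm_le_supNorm ⟨_, by rintro _ ⟨v, hv, rfl⟩; exact hrs v hv⟩ hus)
    _ ≤ M + η := (gain_supNorm_le_of_mem_triggerSet hs hrs).2

lemma gain_norm_le_of_mem_Icc (hξ : ContinuousOn ξ (Ici (t 0))) (hγb : IsClassKInf γb)
    {j N : ℕ} (hM : ∀ v ∈ Icc (t j) (t N), ‖ξ v‖ ≤ M) : ∀ u ∈ Icc (t j) (t N), γb ‖r u‖ ≤ M := by
  intro u hu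
  rcases hu.2.lt_or_eq with huN | rfl
  · obtain ⟨k, hjk, hk⟩ := hmono.exists_le_mem_Ico hu.1 huN
    have hkN : k + 1 ≤ N := hmono.lt_iff_lt.1 (hk.1.trans_lt huN)
    refine gain_norm_le_of_mem_Ico hmono hr hglb htop hξ hγb (fun v hv => hM v ?_) hk
    exact ⟨(hmono.monotone hjk).trans hv.1, hv.2.trans (hmono.monotone hkN)⟩
  · have hr0 : r (t N) = 0 := by
      rw [hr N _ ⟨le_rfl, hmono N.lt_succ_self⟩, intervalIntegral.integral_same]
    rw [hr0, norm_zero, hγb.map_zero]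
    exact (norm_nonneg _).trans (hM _ hu)

lemma gain_norm_le_of_le (hξ : ContinuousOn ξ (Ici (t 0))) (hγb : IsClassKInf γb) {j : ℕ}
    (hM : ∀ v, t j ≤ v → ‖ξ v‖ ≤ M) : ∀ u, t j ≤ u → γb ‖r u‖ ≤ M := by
  intro u hu
  obtain ⟨N, hN⟩ := (htop.eventually_ge_atTop u).exists
  exact gain_norm_le_of_mem_Icc hmono hr hglb htop hξ hγb (fun v hv => hM v hv.1) u ⟨hu, hN⟩

lemma one_div_le_sub_of_norm_le {k : ℕ} (hM : ∀ v, t k ≤ v → ‖ξ v‖ ≤ M) (hK : 0 < K)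
    (hlin : ∀ y, 0 < y → γb y ≤ M → γb y ≤ K * y) : 1 / K ≤ t (k + 1) - t k := by
  suffices t k + 1 / K ≤ t (k + 1) by linarith
  refine (hglb k).2 fun s hs => ?_
  obtain ⟨N, hN⟩ := (htop.eventually_gt_atTop s).exists
  have := one_div_le_sub_of_mem_triggerSet hs
    (norm_le_mul_of_lt hmono hr hN fun v hv => hM v hv.1) hK hlin
  linarith

end Sampled

section SmallGain

variable {γzx γzr γxz γxr γξz γξx γξr γb γ : ℝ → ℝ}
  (hγzx : IsClassKInf γzx) (hγzr : IsClassKInf γzr) (hγxz : IsClassKInf γxz)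
  (hγxr : IsClassKInf γxr) (hγξz : IsClassKInf γξz) (hγξx : IsClassKInf γξx)
  (hγξr : IsClassKInf γξr) (hsg : ∀ s > 0, γzx (γxz s) < s)

include hγzx hsg in
lemma smallGain_symm : ∀ s > 0, γxz (γzx s) < s := by
  intro s hs
  by_contra! h
  exact (hγzx.mono hs.le h).not_gt (hsg _ (hγzx.pos hs))

include hsg in
lemma le_of_le_max_smallGain {Z A : ℝ} (hA : 0 ≤ A) (h : Z ≤ max A (γzx (γxz Z))) : Z ≤ A := by
  by_contra! hZ
  rcases le_max_iff.1 h with h | h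
  · exact hZ.not_ge h
  · exact (hsg Z (hA.trans_lt hZ)).not_ge h

include hγzx hγzr hγxz hγxr hsg in
/-- Feed the `x`-estimate into the `z`-estimate and cancel the loop gain `γzx ∘ γxz`. -/
lemma le_of_smallGain {Z X R Bz Bx : ℝ} (hZ0 : 0 ≤ Z) (hX0 : 0 ≤ X) (hR : 0 ≤ R) (hBx : 0 ≤ Bx)
    (hZ : Z ≤ max Bz (max (γzx X) (γzr R))) (hX : X ≤ max Bx (max (γxz Z) (γxr R))) :
    Z ≤ max (max Bz (γzx Bx)) (max (γzr R) (γzx (γxr R))) := by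
  have hγX : γzx X ≤ max (γzx Bx) (max (γzx (γxz Z)) (γzx (γxr R))) := by
    rw [← hγzx.map_max (hγxz.nonneg hZ0) (hγxr.nonneg hR),
      ← hγzx.map_max hBx (le_max_of_le_left (hγxz.nonneg hZ0))]
    exact hγzx.mono hX0 hX
  refine le_of_le_max_smallGain hsg (le_max_of_le_right (le_max_of_le_left (hγzr.nonneg hR)))
    (hZ.trans ?_)
  grind

include hγzx hγzr hγxz hγxr hγξz hγξx hγξr hsg in
/-- Closing the loop through `r`: since `γb ≥ ε γ` with `ε > 1`, the estimate `ξ ≲ γ(R)` is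
incompatible with `γb(R) ≤ Ξ`, so only the offset term survives. -/
lemma le_of_closedLoop {ε : ℝ} (hε : 1 < ε) (hγbγ : ∀ s > 0, ε * γ s ≤ γb s)
    (hγdef : ∀ s : ℝ, γ s = max (γξz (max (γzr s) (γzx (γxr s))))
      (max (γξx (max (γxr s) (γxz (γzr s)))) (γξr s)))
    {Z X R Ξ Bz Bx : ℝ} (hZ0 : 0 ≤ Z) (hX0 : 0 ≤ X) (hR0 : 0 ≤ R) (hBz : 0 ≤ Bz) (hBx : 0 ≤ Bx)
    (hZ : Z ≤ max Bz (max (γzx X) (γzr R))) (hX : X ≤ max Bx (max (γxz Z) (γxr R)))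
    (hΞ : Ξ ≤ max (γξz Z) (max (γξx X) (γξr R))) (hR : γb R ≤ Ξ) :
    Ξ ≤ max (γξz (max Bz (γzx Bx))) (γξx (max Bx (γxz Bz))) := by
  have hZ' := le_of_smallGain hγzx hγzr hγxz hγxr hsg hZ0 hX0 hR0 hBx hZ hX
  have hX' := le_of_smallGain hγxz hγxr hγzx hγzr (smallGain_symm hγzx hsg) hX0 hZ0 hR0 hBz hX hZ
  have hγξzZ := hγξz.mono hZ0 hZ'
  have hγξxX := hγξx.mono hX0 hX'
  rw [hγξz.map_max (le_max_of_le_left hBz) (le_max_of_le_left (hγzr.nonneg hR0))] at hγξzZ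
  rw [hγξx.map_max (le_max_of_le_left hBx) (le_max_of_le_left (hγxr.nonneg hR0))] at hγξxX
  have hγ0 : γ 0 = 0 := by
    simp [hγdef, hγzr.map_zero, hγxr.map_zero, hγzx.map_zero, hγxz.map_zero, hγξz.map_zero,
      hγξx.map_zero, hγξr.map_zero]
  have hΞγ : Ξ ≤ max (max (γξz (max Bz (γzx Bx))) (γξx (max Bx (γxz Bz)))) (γ R) := by
    rw [hγdef]
    grind
  set C0 := max (γξz (max Bz (γzx Bx))) (γξx (max Bx (γxz Bz)))
  have hC0 : 0 ≤ C0 := le_max_of_le_left (hγξz.nonneg (le_max_of_le_left hBz))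
  by_contra! hC0Ξ
  have hΞR : Ξ ≤ γ R := (le_max_iff.1 hΞγ).resolve_left hC0Ξ.not_ge
  have hRpos : 0 < R := hR0.lt_of_ne fun h => by
    rw [← h, hγ0] at hΞR
    linarith
  nlinarith [hγbγ R hRpos]

include hγzx hγzr hγxz hγxr hγξz hγξx hγξr hsg in
lemma nonpos_of_closedLoop (hγb : IsClassKInf γb) {ε : ℝ} (hε : 1 < ε)
    (hγbγ : ∀ s > 0, ε * γ s ≤ γb s)
    (hγdef : ∀ s : ℝ, γ s = max (γξz (max (γzr s) (γzx (γxr s))))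
      (max (γξx (max (γxr s) (γxz (γzr s)))) (γξr s)))
    {Z X R Ξ : ℝ} (hZ0 : 0 ≤ Z) (hX0 : 0 ≤ X) (hR0 : 0 ≤ R)
    (hZ : Z ≤ max (γzx X) (γzr R)) (hX : X ≤ max (γxz Z) (γxr R))
    (hΞ : Ξ ≤ max (γξz Z) (max (γξx X) (γξr R))) (hR : γb R ≤ Ξ) : Z ≤ 0 ∧ X ≤ 0 := by
  have hΞ0 : Ξ ≤ 0 := by
    simpa [hγzx.map_zero, hγxz.map_zero, hγξz.map_zero, hγξx.map_zero] using
      le_of_closedLoop hγzx hγzr hγxz hγxr hγξz hγξx hγξr hsg hε hγbγ hγdef hZ0 hX0 hR0 le_rfl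
        le_rfl (hZ.trans (le_max_right 0 _)) (hX.trans (le_max_right 0 _)) hΞ hR
  obtain rfl : R = 0 := by
    by_contra h
    linarith [hγb.pos (hR0.lt_of_ne' h)]
  have hZ' := le_of_smallGain hγzx hγzr hγxz hγxr hsg hZ0 hX0 le_rfl le_rfl
    (hZ.trans (le_max_right 0 _)) (hX.trans (le_max_right 0 _))
  have hX' := le_of_smallGain hγxz hγxr hγzx hγzr (smallGain_symm hγzx hsg) hX0 hZ0 le_rfl le_rfl
    (hX.trans (le_max_right 0 _)) (hZ.trans (le_max_right 0 _))
  simp only [hγzx.map_zero, hγzr.map_zero, hγxz.map_zero, hγxr.map_zero, max_self] at hZ' hX'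
  exact ⟨hZ', hX'⟩

end SmallGain

section Estimates

variable {E F G : Type*} [NormedAddCommGroup E] [NormedAddCommGroup F] [NormedAddCommGroup G]

def ISSEstimate (z : ℝ → E) (x : ℝ → F) (r : ℝ → G) (β : ℝ → ℝ → ℝ) (γx γr : ℝ → ℝ)
    (t₀ : ℝ) : Prop :=
  ∀ t₀' t', t₀ ≤ t₀' → t₀' ≤ t' →
    ‖z t'‖ ≤ max (β ‖z t₀'‖ (t' - t₀')) (max (γx (supNorm x t₀' t')) (γr (supNorm r t₀' t')))

def BSIBOEstimate (ξ : ℝ → G) (z : ℝ → E) (x : ℝ → F) (r : ℝ → G) (γz γx γr : ℝ → ℝ)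
    (t₀ : ℝ) : Prop :=
  ∀ t₀' t', t₀ ≤ t₀' → t₀' ≤ t' →
    ‖ξ t'‖ ≤ max (γz (supNorm z t₀' t')) (max (γx (supNorm x t₀' t')) (γr (supNorm r t₀' t')))

variable {z : ℝ → E} {x : ℝ → F} {ξ r : ℝ → G} {β : ℝ → ℝ → ℝ} {γz γx γr : ℝ → ℝ}
  {t₀ a b X Z R : ℝ}

namespace ISSEstimate

variable (h : ISSEstimate z x r β γx γr t₀) (hβ : IsClassKL β) (hγx : IsClassKInf γx)
  (hγr : IsClassKInf γr)
include h hβ hγx hγr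

lemma supNorm_le (ha : t₀ ≤ a) (hX : 0 ≤ X) (hx : ∀ τ ∈ Icc a b, ‖x τ‖ ≤ X) (hR : 0 ≤ R)
    (hr : ∀ τ ∈ Icc a b, ‖r τ‖ ≤ R) :
    supNorm z a b ≤ max (β ‖z a‖ 0) (max (γx X) (γr R)) := by
  refine _root_.supNorm_le (le_max_of_le_right (le_max_of_le_left (hγx.nonneg hX)))
    fun τ hτ => (h a τ ha hτ.1).trans (max_le_max ?_ (max_le_max ?_ ?_))
  · exact hβ.antitone (norm_nonneg _) le_rfl (sub_nonneg.2 hτ.1)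
  · exact hγx.map_supNorm_le hX fun σ hσ => hx σ ⟨hσ.1, hσ.2.trans hτ.2⟩
  · exact hγr.map_supNorm_le hR fun σ hσ => hr σ ⟨hσ.1, hσ.2.trans hτ.2⟩

lemma tailSup_le (ha : t₀ ≤ a) (hab : a ≤ b) (hX : 0 ≤ X) (hx : ∀ τ, a ≤ τ → ‖x τ‖ ≤ X)
    (hR : 0 ≤ R) (hr : ∀ τ, a ≤ τ → ‖r τ‖ ≤ R) :
    tailSup z b ≤ max (β ‖z a‖ (b - a)) (max (γx X) (γr R)) := by
  refine _root_.tailSup_le (le_max_of_le_right (le_max_of_le_left (hγx.nonneg hX)))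
    fun τ hτ => (h a τ ha (hab.trans hτ)).trans (max_le_max ?_ (max_le_max ?_ ?_))
  · exact hβ.antitone (norm_nonneg _) (sub_nonneg.2 hab) (by linarith)
  · exact hγx.map_supNorm_le hX fun σ hσ => hx σ hσ.1
  · exact hγr.map_supNorm_le hR fun σ hσ => hr σ hσ.1

/-- `⨅ k, tailSup v (t k)` is `limsup ‖v‖`; the transient `β` dies out along `t`. -/
lemma iInf_tailSup_le {t : ℕ → ℝ} (ht₀ : t₀ ≤ t 0) (ht : Monotone t)
    (htop : Tendsto t atTop atTop) (hxb : BddAbove ((fun τ => ‖x τ‖) '' Ici (t 0)))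
    (hrb : BddAbove ((fun τ => ‖r τ‖) '' Ici (t 0))) :
    ⨅ k, tailSup z (t k) ≤
      max (γx (⨅ k, tailSup x (t k))) (γr (⨅ k, tailSup r (t k))) := by
  have hstep : ∀ k, ⨅ m, tailSup z (t m) ≤
      max (γx (tailSup x (t k))) (γr (tailSup r (t k))) := by
    intro k
    refine le_of_forall_pos_le_add fun η hη => ?_
    have hβt : Tendsto (fun m => β ‖z (t k)‖ (t m - t k)) atTop (𝓝 0) :=
      (hβ.tendsto_zero (norm_nonneg _)).comp (tendsto_atTop_add_const_right _ _ htop)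
    obtain ⟨m, hm, hkm⟩ :=
      ((hβt.eventually (gt_mem_nhds hη)).and (eventually_ge_atTop k)).exists
    have htk : t₀ ≤ t k := ht₀.trans (ht (Nat.zero_le k))
    have h0 : 0 ≤ max (γx (tailSup x (t k))) (γr (tailSup r (t k))) :=
      le_max_of_le_left (hγx.nonneg (tailSup_nonneg _ _))
    calc ⨅ m, tailSup z (t m) ≤ tailSup z (t m) := iInf_tailSup_le_tailSup z t m
      _ ≤ max (β ‖z (t k)‖ (t m - t k)) (max (γx (tailSup x (t k))) (γr (tailSup r (t k)))) :=
          h.tailSup_le hβ hγx hγr htk (ht hkm) (tailSup_nonneg _ _)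
            (fun τ => norm_le_tailSup hxb (ht (Nat.zero_le k))) (tailSup_nonneg _ _)
            (fun τ => norm_le_tailSup hrb (ht (Nat.zero_le k)))
      _ ≤ _ := max_le (by linarith) (by linarith)
  exact ge_of_tendsto' ((hγx.tendsto_map_tailSup ht hxb).max (hγr.tendsto_map_tailSup ht hrb))
    hstep

end ISSEstimate

namespace BSIBOEstimate

variable (h : BSIBOEstimate ξ z x r γz γx γr t₀) (hγz : IsClassKInf γz) (hγx : IsClassKInf γx)
  (hγr : IsClassKInf γr)
include h hγz hγx hγr

lemma supNorm_le (ha : t₀ ≤ a) (hZ : 0 ≤ Z) (hz : ∀ τ ∈ Icc a b, ‖z τ‖ ≤ Z) (hX : 0 ≤ X)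
    (hx : ∀ τ ∈ Icc a b, ‖x τ‖ ≤ X) (hR : 0 ≤ R) (hr : ∀ τ ∈ Icc a b, ‖r τ‖ ≤ R) :
    supNorm ξ a b ≤ max (γz Z) (max (γx X) (γr R)) :=
  _root_.supNorm_le (le_max_of_le_left (hγz.nonneg hZ)) fun τ hτ =>
    (h a τ ha hτ.1).trans <| max_le_max
      (hγz.map_supNorm_le hZ fun σ hσ => hz σ ⟨hσ.1, hσ.2.trans hτ.2⟩) <| max_le_max
      (hγx.map_supNorm_le hX fun σ hσ => hx σ ⟨hσ.1, hσ.2.trans hτ.2⟩)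
      (hγr.map_supNorm_le hR fun σ hσ => hr σ ⟨hσ.1, hσ.2.trans hτ.2⟩)

lemma iInf_tailSup_le {t : ℕ → ℝ} (ht₀ : t₀ ≤ t 0) (ht : Monotone t)
    (hzb : BddAbove ((fun τ => ‖z τ‖) '' Ici (t 0)))
    (hxb : BddAbove ((fun τ => ‖x τ‖) '' Ici (t 0)))
    (hrb : BddAbove ((fun τ => ‖r τ‖) '' Ici (t 0))) :
    ⨅ k, tailSup ξ (t k) ≤ max (γz (⨅ k, tailSup z (t k)))
      (max (γx (⨅ k, tailSup x (t k))) (γr (⨅ k, tailSup r (t k)))) := by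
  have hstep : ∀ k, ⨅ m, tailSup ξ (t m) ≤
      max (γz (tailSup z (t k))) (max (γx (tailSup x (t k))) (γr (tailSup r (t k)))) := by
    intro k
    have htk := ht (Nat.zero_le k)
    refine (iInf_tailSup_le_tailSup ξ t k).trans ?_
    refine _root_.tailSup_le (le_max_of_le_left (hγz.nonneg (tailSup_nonneg _ _))) fun τ hτ =>
      (h _ τ (ht₀.trans htk) hτ).trans (max_le_max ?_ (max_le_max ?_ ?_))
    · exact hγz.map_supNorm_le (tailSup_nonneg _ _) fun σ hσ => norm_le_tailSup hzb htk hσ.1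
    · exact hγx.map_supNorm_le (tailSup_nonneg _ _) fun σ hσ => norm_le_tailSup hxb htk hσ.1
    · exact hγr.map_supNorm_le (tailSup_nonneg _ _) fun σ hσ => norm_le_tailSup hrb htk hσ.1
  exact ge_of_tendsto' ((hγz.tendsto_map_tailSup ht hzb).max
    ((hγx.tendsto_map_tailSup ht hxb).max (hγr.tendsto_map_tailSup ht hrb))) hstep

end BSIBOEstimate

lemma ISSEstimate.norm_le_of_smallGain {βz βx : ℝ → ℝ → ℝ} {γzx γzr γxz γxr : ℝ → ℝ}
    (hISSz : ISSEstimate z x r βz γzx γzr t₀) (hISSx : ISSEstimate x z r βx γxz γxr t₀)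
    (hβz : IsClassKL βz) (hβx : IsClassKL βx) (hγzx : IsClassKInf γzx)
    (hγzr : IsClassKInf γzr) (hγxz : IsClassKInf γxz) (hγxr : IsClassKInf γxr)
    (hsg : ∀ s > 0, γzx (γxz s) < s) (hzc : ContinuousOn z (Ici t₀))
    (hxc : ContinuousOn x (Ici t₀)) (hR : 0 ≤ R) (hr : ∀ τ, t₀ ≤ τ → ‖r τ‖ ≤ R) :
    ∀ τ, t₀ ≤ τ → ‖z τ‖ ≤
      max (max (βz ‖z t₀‖ 0) (γzx (βx ‖x t₀‖ 0))) (max (γzr R) (γzx (γxr R))) := by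
  intro τ hτ
  have hZ := hISSz.supNorm_le hβz hγzx hγzr le_rfl (supNorm_nonneg x t₀ τ)
    (fun σ hσ => hxc.norm_le_supNorm le_rfl hσ) hR fun σ hσ => hr σ hσ.1
  have hX := hISSx.supNorm_le hβx hγxz hγxr le_rfl (supNorm_nonneg z t₀ τ)
    (fun σ hσ => hzc.norm_le_supNorm le_rfl hσ) hR fun σ hσ => hr σ hσ.1
  exact (hzc.norm_le_supNorm le_rfl ⟨hτ, le_rfl⟩).trans <|
    le_of_smallGain hγzx hγzr hγxz hγxr hsg (supNorm_nonneg _ _ _) (supNorm_nonneg _ _ _) hR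
      (hβx.nonneg (norm_nonneg _) le_rfl) hZ hX

end Estimates

section ClosedLoop

variable {E F G : Type*} [NormedAddCommGroup E] [NormedAddCommGroup F] [NormedAddCommGroup G]
  {z : ℝ → E} {x : ℝ → F} {ξ r : ℝ → G} {t : ℕ → ℝ} {βz βx : ℝ → ℝ → ℝ}
  {γzx γzr γxz γxr γξz γξx γξr γb γ : ℝ → ℝ} {ε : ℝ}
  (hISSz : ISSEstimate z x r βz γzx γzr (t 0)) (hISSx : ISSEstimate x z r βx γxz γxr (t 0))
  (hBSIBO : BSIBOEstimate ξ z x r γξz γξx γξr (t 0))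
  (hβz : IsClassKL βz) (hβx : IsClassKL βx)
  (hγzx : IsClassKInf γzx) (hγzr : IsClassKInf γzr) (hγxz : IsClassKInf γxz)
  (hγxr : IsClassKInf γxr) (hγξz : IsClassKInf γξz) (hγξx : IsClassKInf γξx)
  (hγξr : IsClassKInf γξr) (hγb : IsClassKInf γb) (hsg : ∀ s > 0, γzx (γxz s) < s)
  (hε : 1 < ε) (hγbγ : ∀ s > 0, ε * γ s ≤ γb s)
  (hγdef : ∀ s : ℝ, γ s = max (γξz (max (γzr s) (γzx (γxr s))))
    (max (γξx (max (γxr s) (γxz (γzr s)))) (γξr s)))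
  (hzc : ContinuousOn z (Ici (t 0))) (hxc : ContinuousOn x (Ici (t 0)))
  (htop : Tendsto t atTop atTop)

include hISSz hISSx hBSIBO hβz hβx hγzx hγzr hγxz hγxr hγξz hγξx hγξr hγb hsg hε hγbγ hγdef
  hzc hxc htop

lemma norm_le_of_closedLoop (hξc : ContinuousOn ξ (Ici (t 0)))
    (hwin : ∀ {j N : ℕ} {M : ℝ}, (∀ v ∈ Icc (t j) (t N), ‖ξ v‖ ≤ M) →
      ∀ u ∈ Icc (t j) (t N), γb ‖r u‖ ≤ M) :
    ∀ u, t 0 ≤ u → ‖ξ u‖ ≤ max (γξz (max (βz ‖z (t 0)‖ 0) (γzx (βx ‖x (t 0)‖ 0))))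
      (γξx (max (βx ‖x (t 0)‖ 0) (γxz (βz ‖z (t 0)‖ 0)))) := by
  intro u hu
  obtain ⟨N, hN⟩ := (htop.eventually_ge_atTop u).exists
  obtain ⟨R, hR0, hR⟩ := hγb.exists_forall_le_iff (supNorm_nonneg ξ (t 0) (t N))
  have hr : ∀ v ∈ Icc (t 0) (t N), ‖r v‖ ≤ R := fun v hv => (hR _ (norm_nonneg _)).1 <|
    hwin (fun w hw => hξc.norm_le_supNorm le_rfl hw) v hv
  have hZ := hISSz.supNorm_le hβz hγzx hγzr le_rfl (supNorm_nonneg x _ _)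
    (fun σ hσ => hxc.norm_le_supNorm le_rfl hσ) hR0 hr
  have hX := hISSx.supNorm_le hβx hγxz hγxr le_rfl (supNorm_nonneg z _ _)
    (fun σ hσ => hzc.norm_le_supNorm le_rfl hσ) hR0 hr
  have hΞ := hBSIBO.supNorm_le hγξz hγξx hγξr le_rfl (supNorm_nonneg z _ _)
    (fun σ hσ => hzc.norm_le_supNorm le_rfl hσ) (supNorm_nonneg x _ _)
    (fun σ hσ => hxc.norm_le_supNorm le_rfl hσ) hR0 hr
  exact (hξc.norm_le_supNorm le_rfl ⟨hu, hN⟩).trans <|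
    le_of_closedLoop hγzx hγzr hγxz hγxr hγξz hγξx hγξr hsg hε hγbγ hγdef
      (supNorm_nonneg _ _ _) (supNorm_nonneg _ _ _) hR0 (hβz.nonneg (norm_nonneg _) le_rfl)
      (hβx.nonneg (norm_nonneg _) le_rfl) hZ hX hΞ ((hR R hR0).2 le_rfl)

lemma tendsto_zero_of_closedLoop (ht : Monotone t) {C : ℝ} (hξC : ∀ u, t 0 ≤ u → ‖ξ u‖ ≤ C)
    (hgain : ∀ {j : ℕ} {M : ℝ}, (∀ v, t j ≤ v → ‖ξ v‖ ≤ M) → ∀ u, t j ≤ u → γb ‖r u‖ ≤ M) :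
    Tendsto z atTop (𝓝 0) ∧ Tendsto x atTop (𝓝 0) := by
  obtain ⟨R, hR0, hR⟩ := hγb.exists_forall_le_iff ((norm_nonneg _).trans (hξC _ le_rfl))
  have hr : ∀ u, t 0 ≤ u → ‖r u‖ ≤ R := fun u hu => (hR _ (norm_nonneg _)).1 (hgain hξC u hu)
  have hzb := bddAbove_norm_image_Ici <| hISSz.norm_le_of_smallGain hISSx hβz hβx hγzx hγzr
    hγxz hγxr hsg hzc hxc hR0 hr
  have hxb := bddAbove_norm_image_Ici <| hISSx.norm_le_of_smallGain hISSz hβx hβz hγxz hγxr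
    hγzx hγzr (smallGain_symm hγzx hsg) hxc hzc hR0 hr
  have hξb := bddAbove_norm_image_Ici hξC
  have hrb := bddAbove_norm_image_Ici hr
  have hℓz := hISSz.iInf_tailSup_le hβz hγzx hγzr le_rfl ht htop hxb hrb
  have hℓx := hISSx.iInf_tailSup_le hβx hγxz hγxr le_rfl ht htop hzb hrb
  have hℓξ := hBSIBO.iInf_tailSup_le hγξz hγξx hγξr le_rfl ht hzb hxb hrb
  have hℓr : γb (⨅ k, tailSup r (t k)) ≤ ⨅ k, tailSup ξ (t k) :=
    le_of_tendsto_of_tendsto' (hγb.tendsto_map_tailSup ht hrb) (tendsto_tailSup ht hξb)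
      fun k => hγb.map_tailSup_le (tailSup_nonneg _ _)
        (hgain fun v hv => norm_le_tailSup hξb (ht (Nat.zero_le k)) hv)
  obtain ⟨hz0, hx0⟩ := nonpos_of_closedLoop hγzx hγzr hγxz hγxr hγξz hγξx hγξr hsg hγb hε hγbγ
    hγdef (iInf_tailSup_nonneg z t) (iInf_tailSup_nonneg x t) (iInf_tailSup_nonneg r t) hℓz hℓx
    hℓξ hℓr
  exact ⟨tendsto_zero_of_iInf_tailSup_le_zero ht hzb hz0,
    tendsto_zero_of_iInf_tailSup_le_zero ht hxb hx0⟩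

end ClosedLoop

theorem event_triggered_interconnected_general {q n m : ℕ} (t0 : ℝ)
    (z : ℝ → EuclideanSpace ℝ (Fin q)) (x : ℝ → EuclideanSpace ℝ (Fin n))
    (ξ r : ℝ → EuclideanSpace ℝ (Fin m))
    (hzcont : ContinuousOn z (Set.Ici t0)) (hxcont : ContinuousOn x (Set.Ici t0))
    (hξcont : ContinuousOn ξ (Set.Ici t0))
    (t : ℕ → ℝ) (ht0 : t 0 = t0) (hmono : StrictMono t)
    (γb : ℝ → ℝ) (hγb : IsClassKInf γb)
    (hr : ∀ k : ℕ, ∀ s ∈ Set.Ico (t k) (t (k + 1)), r s = ∫ τ in (t k)..s, ξ τ)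
    (htrig : ∀ k : ℕ, ((t (k + 1) : ℝ) : EReal) = triggerTime γb r (t k))
    (βz βx : ℝ → ℝ → ℝ) (hβz : IsClassKL βz) (hβx : IsClassKL βx)
    (γzx γzr γxz γxr γξz γξx γξr : ℝ → ℝ)
    (hγzx : IsClassKInf γzx) (hγzr : IsClassKInf γzr) (hγxz : IsClassKInf γxz)
    (hγxr : IsClassKInf γxr) (hγξz : IsClassKInf γξz) (hγξx : IsClassKInf γξx)
    (hγξr : IsClassKInf γξr)
    (hISSz : ∀ t0' t', t0 ≤ t0' → t0' ≤ t' →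
      ‖z t'‖ ≤ max (βz ‖z t0'‖ (t' - t0'))
        (max (γzx (supNorm x t0' t')) (γzr (supNorm r t0' t'))))
    (hISSx : ∀ t0' t', t0 ≤ t0' → t0' ≤ t' →
      ‖x t'‖ ≤ max (βx ‖x t0'‖ (t' - t0'))
        (max (γxz (supNorm z t0' t')) (γxr (supNorm r t0' t'))))
    (hBSIBO : ∀ t0' t', t0 ≤ t0' → t0' ≤ t' →
      ‖ξ t'‖ ≤ max (γξz (supNorm z t0' t'))
        (max (γξx (supNorm x t0' t')) (γξr (supNorm r t0' t'))))
    -- small-gain condition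
    (hsg : ∀ s > 0, γzx (γxz s) < s)
    -- γ := max{γ_ξ^z ∘ γ̄_z^r, γ_ξ^x ∘ γ̄_x^r, γ_ξ^r} with
    -- γ̄_z^r := max{γ_z^r, γ_z^x ∘ γ_x^r}, γ̄_x^r := max{γ_x^r, γ_x^z ∘ γ_z^r}
    (γ : ℝ → ℝ)
    (hγdef : ∀ s : ℝ, γ s =
      max (γξz (max (γzr s) (γzx (γxr s))))
        (max (γξx (max (γxr s) (γxz (γzr s)))) (γξr s)))
    (ε : ℝ) (hε : 1 < ε) (hγbγ : ∀ s > 0, ε * γ s ≤ γb s)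
    (hlim : ∃ C : ℝ, 0 < C ∧
      Filter.Tendsto (fun s => γb s / s) (nhdsWithin 0 (Set.Ioi 0)) (nhds C)) :
    (0 < ⨅ k : ℕ, (t (k + 1) - t k)) ∧
      Filter.Tendsto z Filter.atTop (nhds 0) ∧
      Filter.Tendsto x Filter.atTop (nhds 0) := by
  subst ht0
  obtain ⟨C, -, hC⟩ := hlim
  have hlin := eventually_le_mul_of_tendsto_div hC
  have hglb : ∀ k, IsGLB (triggerSet γb r (t k)) (t (k + 1)) := fun k =>
    isGLB_of_coe_eq_sInf (htrig k)
  have htop := tendsto_atTop_of_isGLB_triggerSet hmono hr hglb hξcont hγb hlin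
  have hξb := norm_le_of_closedLoop hISSz hISSx hBSIBO hβz hβx hγzx hγzr hγxz hγxr hγξz hγξx
    hγξr hγb hsg hε hγbγ hγdef hzcont hxcont htop hξcont
    (gain_norm_le_of_mem_Icc hmono hr hglb htop hξcont hγb)
  obtain ⟨K, hK, hKlin⟩ := hγb.exists_le_mul_of_le hlin _
  refine ⟨(one_div_pos.2 hK).trans_le (le_ciInf fun k => ?_), ?_⟩
  · exact one_div_le_sub_of_norm_le hmono hr hglb htop
      (fun v hv => hξb v ((hmono.monotone k.zero_le).trans hv)) hK hKlin
  · exact tendsto_zero_of_closedLoop hISSz hISSx hBSIBO hβz hβx hγzx hγzr hγxz hγxr hγξz hγξx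
      hγξr hγb hsg hε hγbγ hγdef hzcont hxcont htop hmono.monotone hξb
      (gain_norm_le_of_le hmono hr hglb htop hξcont hγb)

/-- Theorem 2 of the paper: event-triggered control of interconnected nonlinear systems. -/
theorem event_triggered_interconnected {q n m : ℕ} (t0 : ℝ)
    (z : ℝ → EuclideanSpace ℝ (Fin q)) (x : ℝ → EuclideanSpace ℝ (Fin n))
    (ξ r : ℝ → EuclideanSpace ℝ (Fin m))
    (hzcont : ContinuousOn z (Set.Ici t0)) (hxcont : ContinuousOn x (Set.Ici t0))
    (hξcont : ContinuousOn ξ (Set.Ici t0))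
    (t : ℕ → ℝ) (ht0 : t 0 = t0) (hmono : StrictMono t)
    (γb : ℝ → ℝ) (hγb : IsClassKInf γb)
    (hr : ∀ k : ℕ, ∀ s ∈ Set.Ico (t k) (t (k + 1)), r s = ∫ τ in (t k)..s, ξ τ)
    (htrig : ∀ k : ℕ, ((t (k + 1) : ℝ) : EReal) = triggerTime γb r (t k))
    (βz βx : ℝ → ℝ → ℝ) (hβz : IsClassKL βz) (hβx : IsClassKL βx)
    (γzx γzr γxz γxr γξz γξx γξr : ℝ → ℝ)
    (hγzx : IsClassKInf γzx) (hγzr : IsClassKInf γzr) (hγxz : IsClassKInf γxz)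
    (hγxr : IsClassKInf γxr) (hγξz : IsClassKInf γξz) (hγξx : IsClassKInf γξx)
    (hγξr : IsClassKInf γξr)
    (hISSz : ∀ t0' t', t0 ≤ t0' → t0' ≤ t' →
      ‖z t'‖ ≤ max (βz ‖z t0'‖ (t' - t0'))
        (max (γzx (supNorm x t0' t')) (γzr (supNorm r t0' t'))))
    (hISSx : ∀ t0' t', t0 ≤ t0' → t0' ≤ t' →
      ‖x t'‖ ≤ max (βx ‖x t0'‖ (t' - t0'))
        (max (γxz (supNorm z t0' t')) (γxr (supNorm r t0' t'))))
    (hBSIBO : ∀ t0' t', t0 ≤ t0' → t0' ≤ t' →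
      ‖ξ t'‖ ≤ max (γξz (supNorm z t0' t'))
        (max (γξx (supNorm x t0' t')) (γξr (supNorm r t0' t'))))
    -- small-gain condition
    (hsg : ∀ s > 0, γzx (γxz s) < s)
    -- γ := max{γ_ξ^z ∘ γ̄_z^r, γ_ξ^x ∘ γ̄_x^r, γ_ξ^r} with
    -- γ̄_z^r := max{γ_z^r, γ_z^x ∘ γ_x^r}, γ̄_x^r := max{γ_x^r, γ_x^z ∘ γ_z^r}
    (γ : ℝ → ℝ)
    (hγdef : ∀ s : ℝ, γ s =
      max (γξz (max (γzr s) (γzx (γxr s))))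
        (max (γξx (max (γxr s) (γxz (γzr s)))) (γξr s)))
    (hlimsup : Filter.limsup (fun s => ((γ s / s : ℝ) : EReal))
      (nhdsWithin 0 (Set.Ioi 0)) < ⊤)
    (ε : ℝ) (hε : 1 < ε) (hγbγ : ∀ s > 0, ε * γ s ≤ γb s)
    (hlim : ∃ C : ℝ, 0 < C ∧
      Filter.Tendsto (fun s => γb s / s) (nhdsWithin 0 (Set.Ioi 0)) (nhds C)) :
    (0 < ⨅ k : ℕ, (t (k + 1) - t k)) ∧
      Filter.Tendsto z Filter.atTop (nhds 0) ∧
      Filter.Tendsto x Filter.atTop (nhds 0) :=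
  event_triggered_interconnected_general t0 z x ξ r hzcont hxcont hξcont t ht0 hmono γb hγb hr htrig
    βz βx hβz hβx γzx γzr γxz γxr γξz γξx γξr hγzx hγzr hγxz hγxr hγξz hγξx hγξr hISSz hISSx hBSIBO
    hsg γ hγdef ε hε hγbγ hlim
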